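/- Let M = {a·(1,0) + b·(1/2, √3/2) : a, b ∈ ℤ} ⊂ ℝ² be the equilateral triangular lattice, and for R ≥ 0 let M_R = M ∩ {x ∈ ℝ² : ‖x‖ ≤ R}. Define n(R) = card(M_R) + 1 and m(R) = card{ {p, q} : p, q ∈ M_R, p ≠ q, ‖p − q‖ = 1 } + card(M_R). Then m(R)/n(R) tends to 4 as R → ∞. -/

import Mathlib

/-!
The number `ℓ(R)` of lattice points in the disk of radius `R` grows like `κ R²` with `κ > 0`
(the lattice point count of a `ZLattice`: area of the unit disk over the covolume). A pair of
lattice points at distance `1` is `{p, p + d}` for exactly one `p` and one `d` among the three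
pairwise non-antipodal unit vectors `(1, 0)`, `(1/2, √3/2)`, `(-1/2, √3/2)`; counting these
oriented edges gives `3 ℓ(R - 1) ≤ #edges ≤ 3 ℓ(R)`. Since `ℓ(R - 1) / ℓ(R) → 1`,
`m(R) / n(R) = (#edges + ℓ(R)) / (ℓ(R) + 1) → 4`.
-/

/-- The equilateral triangular lattice in the plane, generated by
`(1, 0)` and `(1/2, √3/2)`. -/
noncomputable def triLattice : Set (EuclideanSpace ℝ (Fin 2)) :=
  {x | ∃ a b : ℤ,
    x = (a : ℝ) • ((WithLp.equiv 2 (Fin 2 → ℝ)).symm ![1, 0])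
      + (b : ℝ) • ((WithLp.equiv 2 (Fin 2 → ℝ)).symm ![1/2, Real.sqrt 3 / 2])}

/-- The lattice points in the closed disk of radius `R`. -/
noncomputable def triLatticeBall (R : ℝ) : Set (EuclideanSpace ℝ (Fin 2)) :=
  triLattice ∩ {x | ‖x‖ ≤ R}

/-- The number of horospheres in the packing: one sphere per lattice point in the
disk of radius `R`, plus the horizontal plane `x₃ = 1`. -/
noncomputable def horoCount (R : ℝ) : ℕ := (triLatticeBall R).ncard + 1

/-- The number of tangency points: pairs of lattice points at distance `1`
(tangent spheres), plus one tangency of each sphere with the plane `x₃ = 1`. -/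
noncomputable def tangencyCount (R : ℝ) : ℕ :=
  Set.ncard {S : Set (EuclideanSpace ℝ (Fin 2)) |
    ∃ p q, p ∈ triLatticeBall R ∧ q ∈ triLatticeBall R ∧ p ≠ q ∧ ‖p - q‖ = 1 ∧
      S = {p, q}} + (triLatticeBall R).ncard

open Metric Filter Topology MeasureTheory Module Submodule

theorem ZLattice.tendsto_ncard_inter_closedBall_div_pow {E : Type*} [NormedAddCommGroup E]
    [InnerProductSpace ℝ E] [FiniteDimensional ℝ E] [MeasurableSpace E] [BorelSpace E]
    [Nontrivial E] (L : Submodule ℤ E) [DiscreteTopology L] [IsZLattice ℝ L] :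
    Tendsto (fun R : ℝ => ((L ∩ closedBall (0 : E) R : Set E).ncard : ℝ) / R ^ finrank ℝ E)
      atTop (𝓝 (volume.real (closedBall (0 : E) 1) / ZLattice.covolume L)) := by
  have hd : finrank ℝ E ≠ 0 := finrank_pos.ne'
  have hball : ∀ {c : ℝ}, 0 ≤ c →
      {x : E | x ∈ Set.univ ∧ ‖x‖ ^ finrank ℝ E ≤ c ^ finrank ℝ E} = closedBall 0 c := by
    intro c hc
    ext x
    simp [pow_le_pow_iff_left₀ (norm_nonneg x) hc hd]
  have hunit := hball zero_le_one
  rw [one_pow] at hunit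
  have key := ZLattice.covolume.tendsto_card_le_div' L (X := Set.univ)
    (F := fun x => ‖x‖ ^ finrank ℝ E) (fun _ _ _ _ => trivial)
    (fun x r hr => by rw [norm_smul, mul_pow, Real.norm_of_nonneg hr])
    (hunit ▸ isBounded_closedBall) (hunit ▸ measurableSet_closedBall)
    (by rw [hunit, frontier_closedBall _ one_ne_zero]; exact Measure.addHaar_sphere _ _ _)
  rw [hunit] at key
  refine (key.comp (tendsto_pow_atTop hd)).congr' ?_
  filter_upwards [eventually_ge_atTop 0] with R hR
  rw [Function.comp_apply, hball hR, Set.inter_comm, Nat.card_coe_set_eq]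

theorem ZLattice.volume_closedBall_div_covolume_pos {E : Type*} [NormedAddCommGroup E]
    [InnerProductSpace ℝ E] [FiniteDimensional ℝ E] [MeasurableSpace E] [BorelSpace E]
    (L : Submodule ℤ E) [DiscreteTopology L] [IsZLattice ℝ L] :
    0 < volume.real (closedBall (0 : E) 1) / ZLattice.covolume L :=
  div_pos (ENNReal.toReal_pos (measure_closedBall_pos _ _ one_pos).ne' measure_closedBall_lt_top.ne)
    (ZLattice.covolume_pos L volume)

lemma tendsto_div_of_tendsto_div {α : Type*} {l : Filter α} {f g h : α → ℝ} {a b : ℝ}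
    (hf : Tendsto (fun x => f x / h x) l (𝓝 a)) (hg : Tendsto (fun x => g x / h x) l (𝓝 b))
    (hb : b ≠ 0) (hh : ∀ᶠ x in l, h x ≠ 0) : Tendsto (fun x => f x / g x) l (𝓝 (a / b)) :=
  (hf.div hg hb).congr' (hh.mono fun _ hx => div_div_div_cancel_right₀ hx _ _)

lemma tendsto_comp_sub_div_pow {f : ℝ → ℝ} {κ : ℝ} {d : ℕ} (c : ℝ)
    (hf : Tendsto (fun R => f R / R ^ d) atTop (𝓝 κ)) :
    Tendsto (fun R => f (R - c) / R ^ d) atTop (𝓝 κ) := by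
  have hratio : Tendsto (fun R : ℝ => 1 - c * R⁻¹) atTop (𝓝 1) := by
    simpa using (tendsto_inv_atTop_zero.const_mul c).const_sub 1
  have := (hf.comp (tendsto_atTop_add_const_right _ (-c) tendsto_id)).mul (hratio.pow d)
  rw [one_pow, mul_one] at this
  refine this.congr' ?_
  filter_upwards [eventually_gt_atTop c, eventually_gt_atTop 0] with R hRc hR0
  have : R - c ≠ 0 := sub_ne_zero.mpr hRc.ne'
  simp only [Function.comp_apply, id, ← sub_eq_add_neg]
  rw [show 1 - c * R⁻¹ = (R - c) / R by field_simp, div_pow]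
  field_simp

lemma tendsto_comp_sub_one_mul_three_add_div_add_one {ℓ : ℝ → ℝ} {κ : ℝ} (hκ : 0 < κ)
    (hℓ : Tendsto (fun R => ℓ R / R ^ 2) atTop (𝓝 κ)) :
    Tendsto (fun R => (ℓ (R - 1) * 3 + ℓ R) / (ℓ R + 1)) atTop (𝓝 4) := by
  have hnum : Tendsto (fun R => (ℓ (R - 1) * 3 + ℓ R) / R ^ 2) atTop (𝓝 (κ * 3 + κ)) :=
    (((tendsto_comp_sub_div_pow 1 hℓ).mul_const 3).add hℓ).congr fun R => by ring
  have hden : Tendsto (fun R => (ℓ R + 1) / R ^ 2) atTop (𝓝 (κ + 0)) :=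
    (hℓ.add (tendsto_pow_atTop two_ne_zero).inv_tendsto_atTop).congr fun R => by
      simp only [Pi.inv_apply]; ring
  convert tendsto_div_of_tendsto_div hnum hden (by positivity)
    ((eventually_ne_atTop 0).mono fun R hR => pow_ne_zero 2 hR) using 2
  field_simp
  ring

section UnitPairs

variable {E ι : Type*} [NormedAddCommGroup E]

def unitPairs (P : Set E) : Set (Set E) :=
  {S | ∃ p q, p ∈ P ∧ q ∈ P ∧ p ≠ q ∧ ‖p - q‖ = 1 ∧ S = {p, q}}

def orientedEdges (P : Set E) (s : ι → E) : Set (E × ι) :=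
  {x | x.1 ∈ P ∧ x.1 + s x.2 ∈ P}

variable {s : ι → E}

lemma pair_add_injective (hs : Function.Injective s) (hs_add : ∀ i j, s i + s j ≠ 0) :
    Function.Injective fun x : E × ι => ({x.1, x.1 + s x.2} : Set E) := by
  rintro ⟨p, i⟩ ⟨q, j⟩ h
  simp only [Set.pair_eq_pair_iff] at h
  rcases h with ⟨rfl, h⟩ | ⟨rfl, h⟩
  · rw [hs (add_left_cancel h)]
  · refine absurd ?_ (hs_add j i)
    rwa [add_assoc, add_eq_left] at h

lemma image_orientedEdges (P : Set E) (hs_norm : ∀ i, ‖s i‖ = 1)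
    (hP : ∀ p ∈ P, ∀ q ∈ P, ‖p - q‖ = 1 → ∃ i, q = p + s i ∨ p = q + s i) :
    (fun x : E × ι => ({x.1, x.1 + s x.2} : Set E)) '' orientedEdges P s = unitPairs P := by
  ext S
  constructor
  · rintro ⟨⟨p, i⟩, ⟨hp, hpi⟩, rfl⟩
    refine ⟨p, p + s i, hp, hpi, fun h => ?_, by simp [hs_norm], rfl⟩
    simpa [hs_norm] using congrArg norm (left_eq_add.mp h)
  · rintro ⟨p, q, hp, hq, -, hpq, rfl⟩
    obtain ⟨i, rfl | rfl⟩ := hP p hp q hq hpq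
    · exact ⟨(p, i), ⟨hp, hq⟩, rfl⟩
    · exact ⟨(q, i), ⟨hq, hp⟩, Set.pair_comm _ _⟩

lemma ncard_unitPairs (P : Set E) (hs : Function.Injective s) (hs_add : ∀ i j, s i + s j ≠ 0)
    (hs_norm : ∀ i, ‖s i‖ = 1)
    (hP : ∀ p ∈ P, ∀ q ∈ P, ‖p - q‖ = 1 → ∃ i, q = p + s i ∨ p = q + s i) :
    (unitPairs P).ncard = (orientedEdges P s).ncard := by
  rw [← image_orientedEdges P hs_norm hP,
    Set.ncard_image_of_injective _ (pair_add_injective hs hs_add)]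

variable [Finite ι]

lemma ncard_orientedEdges_le {P : Set E} (hP : P.Finite) :
    (orientedEdges P s).ncard ≤ P.ncard * Nat.card ι := by
  rw [← Set.ncard_univ, ← Set.ncard_prod]
  exact Set.ncard_le_ncard (fun x hx => ⟨hx.1, trivial⟩) (hP.prod Set.finite_univ)

lemma le_ncard_orientedEdges {P Q : Set E} (hP : P.Finite) (hQP : Q ⊆ P)
    (hQ : ∀ q ∈ Q, ∀ i, q + s i ∈ P) :
    Q.ncard * Nat.card ι ≤ (orientedEdges P s).ncard := by
  rw [← Set.ncard_univ, ← Set.ncard_prod]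
  refine Set.ncard_le_ncard (fun x hx => ⟨hQP hx.1, hQ _ hx.1 _⟩) ?_
  exact (hP.prod Set.finite_univ).subset fun x hx => ⟨hx.1, trivial⟩

end UnitPairs

noncomputable def triGen : Fin 2 → EuclideanSpace ℝ (Fin 2) :=
  ![(WithLp.equiv 2 (Fin 2 → ℝ)).symm ![1, 0], (WithLp.equiv 2 (Fin 2 → ℝ)).symm ![1/2, √3 / 2]]

lemma triGen_linearIndependent : LinearIndependent ℝ triGen := by
  rw [triGen, LinearIndependent.pair_iff]
  intro s t h
  obtain rfl : t = 0 := by simpa using congrArg (· 1) h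
  simpa using congrArg (· 0) h

noncomputable def triBasis : Basis (Fin 2) ℝ (EuclideanSpace ℝ (Fin 2)) :=
  basisOfLinearIndependentOfCardEqFinrank triGen_linearIndependent (by simp)

noncomputable def triPoint : ℤ × ℤ →+ EuclideanSpace ℝ (Fin 2) :=
  (zmultiplesHom _ (triGen 0)).coprod (zmultiplesHom _ (triGen 1))

lemma triPoint_apply (p : ℤ × ℤ) : triPoint p = p.1 • triGen 0 + p.2 • triGen 1 := rfl

lemma triPoint_apply_zero (p : ℤ × ℤ) : triPoint p 0 = p.1 + p.2 / 2 := by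
  simp [triPoint_apply, triGen, div_eq_mul_inv]

lemma triPoint_apply_one (p : ℤ × ℤ) : triPoint p 1 = p.2 * (√3 / 2) := by
  simp [triPoint_apply, triGen]

lemma norm_triPoint_sq (p : ℤ × ℤ) : ‖triPoint p‖ ^ 2 = p.1 ^ 2 + p.1 * p.2 + p.2 ^ 2 := by
  rw [EuclideanSpace.norm_sq_eq, Fin.sum_univ_two, triPoint_apply_zero, triPoint_apply_one]
  simp only [Real.norm_eq_abs, sq_abs]
  nlinarith [Real.sq_sqrt (show (0 : ℝ) ≤ 3 by norm_num)]

lemma triPoint_injective : Function.Injective triPoint := by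
  intro p q h
  have h₀ := congrArg (· 0) h
  have h₁ := congrArg (· 1) h
  simp only [triPoint_apply_zero, triPoint_apply_one] at h₀ h₁
  have hb : (p.2 : ℝ) = q.2 := mul_right_cancel₀ (by positivity) h₁
  rw [hb, add_left_inj] at h₀
  exact Prod.ext (by exact_mod_cast h₀) (by exact_mod_cast hb)

lemma range_triPoint : Set.range triPoint = triLattice := by
  ext x
  simp only [triLattice, triPoint_apply, triGen, Set.mem_range, Set.mem_ofPred_eq, Prod.exists,
    ← Int.cast_smul_eq_zsmul ℝ]
  exact exists₂_congr fun a b => eq_comm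

lemma triLattice_eq_span : triLattice = span ℤ (Set.range triBasis) := by
  ext x
  rw [← range_triPoint, triBasis, coe_basisOfLinearIndependentOfCardEqFinrank, SetLike.mem_coe,
    mem_span_range_iff_exists_fun, Set.mem_range]
  simp only [Fin.sum_univ_two, triPoint_apply, Prod.exists, eq_comm]
  exact ⟨fun ⟨a, b, h⟩ => ⟨![a, b], h⟩, fun ⟨c, h⟩ => ⟨c 0, c 1, h⟩⟩

lemma triLatticeBall_eq (R : ℝ) :
    triLatticeBall R = (span ℤ (Set.range triBasis) : Set _) ∩ closedBall 0 R := by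
  ext x
  simp [triLatticeBall, triLattice_eq_span]

lemma finite_triLatticeBall (R : ℝ) : (triLatticeBall R).Finite := by
  rw [triLatticeBall_eq, Set.inter_comm]
  exact ZSpan.setFinite_inter triBasis isBounded_closedBall

lemma exists_pos_tendsto_ncard_triLatticeBall_div_sq :
    ∃ κ > 0, Tendsto (fun R : ℝ => ((triLatticeBall R).ncard : ℝ) / R ^ 2) atTop (𝓝 κ) := by
  have h := ZLattice.tendsto_ncard_inter_closedBall_div_pow (span ℤ (Set.range triBasis))
  rw [finrank_euclideanSpace_fin] at h
  simp_rw [← triLatticeBall_eq] at h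
  exact ⟨_, ZLattice.volume_closedBall_div_covolume_pos _, h⟩

def unitDir : Fin 3 → ℤ × ℤ := ![(1, 0), (0, 1), (-1, 1)]

lemma exists_eq_unitDir_of_sq_add_mul_add_sq_eq_one {p : ℤ × ℤ}
    (h : p.1 ^ 2 + p.1 * p.2 + p.2 ^ 2 = 1) :
    ∃ i, p = unitDir i ∨ p = -unitDir i := by
  obtain ⟨a, b⟩ := p
  obtain ⟨ha₁, ha₂⟩ : -1 ≤ a ∧ a ≤ 1 := by constructor <;> nlinarith [sq_nonneg (a + 2 * b)]
  obtain ⟨hb₁, hb₂⟩ : -1 ≤ b ∧ b ≤ 1 := by constructor <;> nlinarith [sq_nonneg (2 * a + b)]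
  revert h
  interval_cases a <;> interval_cases b <;> decide

noncomputable def triStep (i : Fin 3) : EuclideanSpace ℝ (Fin 2) := triPoint (unitDir i)

lemma norm_triStep (i : Fin 3) : ‖triStep i‖ = 1 := by
  rw [← pow_left_inj₀ (norm_nonneg _) zero_le_one two_ne_zero, triStep, norm_triPoint_sq]
  fin_cases i <;> norm_num [unitDir]

lemma triStep_injective : Function.Injective triStep :=
  triPoint_injective.comp (by decide : Function.Injective unitDir)

lemma triStep_add_triStep_ne_zero (i j : Fin 3) : triStep i + triStep j ≠ 0 := by
  rw [triStep, triStep, ← map_add, ← map_zero triPoint, triPoint_injective.ne_iff]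
  revert i j
  decide

lemma exists_triStep_of_norm_sub_eq_one {p q : EuclideanSpace ℝ (Fin 2)} (hp : p ∈ triLattice)
    (hq : q ∈ triLattice) (hpq : ‖p - q‖ = 1) : ∃ i, q = p + triStep i ∨ p = q + triStep i := by
  obtain ⟨u, hu⟩ : p - q ∈ Set.range triPoint := by
    rw [range_triPoint, triLattice_eq_span] at *
    exact sub_mem hp hq
  have hQ : u.1 ^ 2 + u.1 * u.2 + u.2 ^ 2 = 1 := by
    have := norm_triPoint_sq u
    rw [hu, hpq, one_pow] at this
    exact_mod_cast this.symm
  obtain ⟨i, rfl | rfl⟩ := exists_eq_unitDir_of_sq_add_mul_add_sq_eq_one hQ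
  · exact ⟨i, Or.inr (by rw [triStep, hu, add_sub_cancel])⟩
  · refine ⟨i, Or.inl ?_⟩
    rw [map_neg, neg_eq_iff_eq_neg, neg_sub] at hu
    rw [triStep, hu, add_sub_cancel]

lemma tangencyCount_eq (R : ℝ) :
    tangencyCount R =
      (orientedEdges (triLatticeBall R) triStep).ncard + (triLatticeBall R).ncard := by
  rw [← ncard_unitPairs _ triStep_injective triStep_add_triStep_ne_zero norm_triStep
    fun p hp q hq => exists_triStep_of_norm_sub_eq_one hp.1 hq.1]
  rfl

lemma add_triStep_mem_triLattice {p : EuclideanSpace ℝ (Fin 2)} (hp : p ∈ triLattice) (i : Fin 3) :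
    p + triStep i ∈ triLattice := by
  rw [← range_triPoint] at hp ⊢
  obtain ⟨u, rfl⟩ := hp
  exact ⟨u + unitDir i, map_add _ _ _⟩

lemma ncard_triLatticeBall_sub_one_mul_three_le (R : ℝ) :
    (triLatticeBall (R - 1)).ncard * 3 ≤ (orientedEdges (triLatticeBall R) triStep).ncard := by
  have hsub : triLatticeBall (R - 1) ⊆ triLatticeBall R :=
    fun p hp => ⟨hp.1, hp.2.out.trans (by linarith)⟩
  have hstep (p) (hp : p ∈ triLatticeBall (R - 1)) (i : Fin 3) : p + triStep i ∈ triLatticeBall R :=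
    ⟨add_triStep_mem_triLattice hp.1 i, calc
      ‖p + triStep i‖ ≤ ‖p‖ + 1 := norm_triStep i ▸ norm_add_le _ _
      _ ≤ R := by linarith [hp.2.out]⟩
  simpa using le_ncard_orientedEdges (finite_triLatticeBall R) hsub hstep

/-- for the triangular-lattice horosphere packing, the ratio
`m(R)/n(R)` tends to `4` as `R → ∞`. -/
theorem tangencyCount_div_horoCount_tendsto_four :
    Filter.Tendsto (fun R : ℝ => (tangencyCount R : ℝ) / (horoCount R : ℝ))
      Filter.atTop (nhds 4) := by
  obtain ⟨κ, hκ, hball⟩ := exists_pos_tendsto_ncard_triLatticeBall_div_sq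
  refine tendsto_of_tendsto_of_tendsto_of_le_of_le
    (tendsto_comp_sub_one_mul_three_add_div_add_one hκ hball) tendsto_const_nhds
    (fun R => ?_) (fun R => ?_)
  · rw [tangencyCount_eq, horoCount]
    push_cast
    gcongr
    exact_mod_cast ncard_triLatticeBall_sub_one_mul_three_le R
  · have hedges : ((orientedEdges (triLatticeBall R) triStep).ncard : ℝ)
        ≤ (triLatticeBall R).ncard * 3 := by
      exact_mod_cast Nat.card_fin 3 ▸
        ncard_orientedEdges_le (s := triStep) (finite_triLatticeBall R)
    rw [tangencyCount_eq, horoCount, div_le_iff₀ (by positivity)]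
    push_cast
    linarith
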